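/- Let d ≥ 1, 0 < ε < 1, let b ∈ ℝ^d be a nonzero constant vector, let u : ℝ^d → ℝ be twice continuously differentiable with compact support, and set f := −εΔu + ⟨b, ∇u⟩. Assume c_b ≤ exp(−⟨b,x⟩) ≤ C_b for all x in the support of u, with 0 < c_b ≤ C_b. Then ε ∫_{ℝ^d} |∇u(x)|² dx ≤ C_b / (c_b (1−ε)‖b‖²) · ‖f‖_{L²}². -/

import Mathlib

/-!
Test the equation against `u w` with the weight `w x = exp (-⟪b, x⟫)`, for which `∇w = -w b`.
Green's formula gives `∫ u w Δu = -∫ ‖∇u‖² w + ∫ u w ⟪b, ∇u⟫`, and an integration by parts along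
`b` gives `∫ u w ⟪b, ∇u⟫ = ‖b‖²/2 ∫ u² w`, so that
`∫ f u w = ε ∫ ‖∇u‖² w + (1 - ε) ‖b‖²/2 ∫ u² w`.
Young's inequality `f u ≤ (1 - ε) ‖b‖²/2 u² + f² / (2 (1 - ε) ‖b‖²)` absorbs the zeroth-order
term, and `c_b ≤ w ≤ C_b` on the support of `u` removes the weight.
-/

open MeasureTheory RealInnerProductSpace

/-- Laplacian of `u : ℝ^d → ℝ`, `Δu = Σᵢ ∂²u/∂xᵢ²`. -/
noncomputable def lap {d : ℕ} (u : EuclideanSpace ℝ (Fin d) → ℝ)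
    (x : EuclideanSpace ℝ (Fin d)) : ℝ :=
  ∑ i, fderiv ℝ (fun y => fderiv ℝ u y (EuclideanSpace.single i 1)) x
    (EuclideanSpace.single i 1)

theorem HasCompactSupport.pow {α β : Type*} [TopologicalSpace α] [MonoidWithZero β] {f : α → β}
    (hf : HasCompactSupport f) {n : ℕ} (hn : n ≠ 0) : HasCompactSupport fun x => f x ^ n :=
  hf.comp_left (zero_pow hn)

section IntegrationByParts

variable {E : Type*} [NormedAddCommGroup E] [NormedSpace ℝ E] [FiniteDimensional ℝ E]
  [MeasurableSpace E] [BorelSpace E] {μ : Measure E} [μ.IsAddHaarMeasure]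

theorem integral_mul_fderiv_eq_neg_fderiv_mul_of_hasCompactSupport {f g : E → ℝ}
    (hf : ContDiff ℝ 1 f) (hg : ContDiff ℝ 1 g) (hgc : HasCompactSupport g) (v : E) :
    ∫ x, f x * fderiv ℝ g x v ∂μ = -∫ x, fderiv ℝ f x v * g x ∂μ := by
  have hf' : Continuous fun x => fderiv ℝ f x v :=
    (hf.continuous_fderiv one_ne_zero).clm_apply continuous_const
  have hg' : Continuous fun x => fderiv ℝ g x v :=
    (hg.continuous_fderiv one_ne_zero).clm_apply continuous_const
  exact integral_mul_fderiv_eq_neg_fderiv_mul_of_integrable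
    ((hf'.mul hg.continuous).integrable_of_hasCompactSupport hgc.mul_left)
    ((hf.continuous.mul hg').integrable_of_hasCompactSupport (hgc.fderiv_apply ℝ v).mul_left)
    ((hf.continuous.mul hg.continuous).integrable_of_hasCompactSupport hgc.mul_left)
    (fun x _ => hf.differentiable one_ne_zero x) (fun x _ => hg.differentiable one_ne_zero x)

end IntegrationByParts

section Gradient

variable {E : Type*} [NormedAddCommGroup E] [InnerProductSpace ℝ E] [CompleteSpace E]

theorem ContDiff.continuous_gradient {u : E → ℝ} {n : WithTop ℕ∞} (hu : ContDiff ℝ n u)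
    (hn : n ≠ 0) : Continuous (gradient u) :=
  (InnerProductSpace.toDual ℝ E).symm.continuous.comp (hu.continuous_fderiv hn)

theorem gradient_eq_zero_of_notMem_tsupport {u : E → ℝ} {x : E} (hx : x ∉ tsupport u) :
    gradient u x = 0 := by
  simp [gradient, fderiv_of_notMem_tsupport ℝ hx]

theorem HasCompactSupport.gradient {u : E → ℝ} (huc : HasCompactSupport u) :
    HasCompactSupport (gradient u) :=
  (huc.fderiv (𝕜 := ℝ)).comp_left (map_zero _)

theorem EuclideanSpace.gradient_apply {ι : Type*} [Fintype ι] [DecidableEq ι]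
    (u : EuclideanSpace ℝ ι → ℝ) (x : EuclideanSpace ℝ ι) (i : ι) :
    gradient u x i = fderiv ℝ u x (EuclideanSpace.single i 1) := by
  rw [← inner_gradient_left, EuclideanSpace.inner_single_right]
  simp

theorem EuclideanSpace.inner_gradient_eq_sum {ι : Type*} [Fintype ι] [DecidableEq ι]
    (g u : EuclideanSpace ℝ ι → ℝ) (x : EuclideanSpace ℝ ι) :
    ⟪gradient g x, gradient u x⟫
      = ∑ i, fderiv ℝ g x (EuclideanSpace.single i 1)
          * fderiv ℝ u x (EuclideanSpace.single i 1) := by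
  simp only [PiLp.inner_apply, EuclideanSpace.gradient_apply, RCLike.inner_apply, conj_trivial,
    mul_comm]

end Gradient

section ExpWeight

variable {E : Type*} [NormedAddCommGroup E] [InnerProductSpace ℝ E]

noncomputable def expWeight (b x : E) : ℝ := Real.exp (-⟪b, x⟫)

theorem expWeight_pos (b x : E) : 0 < expWeight b x := Real.exp_pos _

theorem contDiff_expWeight (b : E) {n : WithTop ℕ∞} : ContDiff ℝ n (expWeight b) :=
  (innerSL ℝ b).contDiff.neg.exp

theorem hasFDerivAt_expWeight (b x : E) :
    HasFDerivAt (expWeight b) (-(expWeight b x • innerSL ℝ b)) x := by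
  unfold expWeight
  simpa using ((innerSL ℝ b).hasFDerivAt (x := x)).neg.exp

theorem fderiv_mul_expWeight_apply {u : E → ℝ} {x : E} (hu : DifferentiableAt ℝ u x) (b v : E) :
    fderiv ℝ (fun y => u y * expWeight b y) x v
      = (fderiv ℝ u x v - ⟪b, v⟫ * u x) * expWeight b x := by
  rw [fderiv_fun_mul hu (hasFDerivAt_expWeight b x).differentiableAt,
    (hasFDerivAt_expWeight b x).fderiv]
  simp only [add_apply, smul_apply, neg_apply, coe_innerSL_apply, smul_neg, smul_eq_mul]
  ring

end ExpWeight

section WeightedTransport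

variable {E : Type*} [NormedAddCommGroup E] [InnerProductSpace ℝ E] [FiniteDimensional ℝ E]
  [MeasurableSpace E] [BorelSpace E] {μ : Measure E} [μ.IsAddHaarMeasure]

theorem integral_mul_expWeight_mul_fderiv_self {u : E → ℝ} (hu : ContDiff ℝ 1 u)
    (huc : HasCompactSupport u) (b : E) :
    ∫ x, u x * expWeight b x * fderiv ℝ u x b ∂μ
      = ‖b‖ ^ 2 / 2 * ∫ x, u x ^ 2 * expWeight b x ∂μ := by
  have huw : ContDiff ℝ 1 fun x => u x * expWeight b x := hu.mul (contDiff_expWeight b)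
  have hK : Integrable (fun x => u x * expWeight b x * fderiv ℝ u x b) μ :=
    (huw.continuous.mul ((hu.continuous_fderiv one_ne_zero).clm_apply continuous_const)
      ).integrable_of_hasCompactSupport huc.mul_right.mul_right
  have hM : Integrable (fun x => u x ^ 2 * expWeight b x) μ :=
    ((hu.continuous.pow 2).mul (contDiff_expWeight b (n := 0)).continuous
      ).integrable_of_hasCompactSupport (huc.pow two_ne_zero).mul_right
  have ibp := integral_mul_fderiv_eq_neg_fderiv_mul_of_hasCompactSupport (μ := μ) huw hu huc b
  have hderiv : (fun x => fderiv ℝ (fun y => u y * expWeight b y) x b * u x)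
      = fun x => u x * expWeight b x * fderiv ℝ u x b - ‖b‖ ^ 2 * (u x ^ 2 * expWeight b x) := by
    ext x
    rw [fderiv_mul_expWeight_apply (hu.differentiable one_ne_zero x), real_inner_self_eq_norm_sq]
    ring
  rw [hderiv, integral_sub hK (hM.const_mul _), integral_const_mul] at ibp
  linarith

theorem integrable_sq_norm_gradient_mul_expWeight {u : E → ℝ} (hu : ContDiff ℝ 1 u)
    (huc : HasCompactSupport u) (b : E) :
    Integrable (fun x => ‖gradient u x‖ ^ 2 * expWeight b x) μ :=
  (((hu.continuous_gradient one_ne_zero).norm.pow 2).mul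
    (contDiff_expWeight b (n := 0)).continuous).integrable_of_hasCompactSupport
    (huc.gradient.norm.pow two_ne_zero).mul_right

end WeightedTransport

section Laplacian

variable {d : ℕ}

theorem ContDiff.continuous_lap {u : EuclideanSpace ℝ (Fin d) → ℝ} (hu : ContDiff ℝ 2 u) :
    Continuous (lap u) :=
  continuous_finsetSum _ fun _ _ =>
    (((hu.fderiv_right (m := 1) (by norm_num)).clm_apply contDiff_const).continuous_fderiv
      one_ne_zero).clm_apply continuous_const

theorem lap_eq_zero_of_notMem_tsupport {u : EuclideanSpace ℝ (Fin d) → ℝ}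
    {x : EuclideanSpace ℝ (Fin d)} (hx : x ∉ tsupport u) : lap u x = 0 :=
  Finset.sum_eq_zero fun _ _ => by
    rw [fderiv_of_notMem_tsupport ℝ fun h => hx (tsupport_fderiv_apply_subset ℝ _ h)]
    rfl

theorem integral_mul_lap {g u : EuclideanSpace ℝ (Fin d) → ℝ} (hg : ContDiff ℝ 1 g)
    (hu : ContDiff ℝ 2 u) (huc : HasCompactSupport u) :
    ∫ x, g x * lap u x = -∫ x, ⟪gradient g x, gradient u x⟫ := by
  set e : Fin d → EuclideanSpace ℝ (Fin d) := fun i => EuclideanSpace.single i 1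
  have hDu : ∀ i, ContDiff ℝ 1 fun y => fderiv ℝ u y (e i) := fun i =>
    (hu.fderiv_right (m := 1) (by norm_num)).clm_apply contDiff_const
  have hint₁ : ∀ i, Integrable fun x => g x * fderiv ℝ (fun y => fderiv ℝ u y (e i)) x (e i) :=
    fun i => (hg.continuous.mul (((hDu i).continuous_fderiv one_ne_zero).clm_apply
      continuous_const)).integrable_of_hasCompactSupport
        ((huc.fderiv_apply ℝ _).fderiv_apply ℝ _).mul_left
  have hint₂ : ∀ i, Integrable fun x => fderiv ℝ g x (e i) * fderiv ℝ u x (e i) :=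
    fun i => (((hg.continuous_fderiv one_ne_zero).clm_apply continuous_const).mul
      (hDu i).continuous).integrable_of_hasCompactSupport (huc.fderiv_apply ℝ _).mul_left
  simp_rw [lap, Finset.mul_sum, EuclideanSpace.inner_gradient_eq_sum]
  rw [integral_finsetSum _ fun i _ => hint₁ i, integral_finsetSum _ fun i _ => hint₂ i,
    ← Finset.sum_neg_distrib]
  exact Finset.sum_congr rfl fun i _ =>
    integral_mul_fderiv_eq_neg_fderiv_mul_of_hasCompactSupport hg (hDu i)
      (huc.fderiv_apply ℝ _) _

end Laplacian

section AdvectionDiffusion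

variable {d : ℕ}

noncomputable def advectionDiffusion (ε : ℝ) (b : EuclideanSpace ℝ (Fin d))
    (u : EuclideanSpace ℝ (Fin d) → ℝ) (x : EuclideanSpace ℝ (Fin d)) : ℝ :=
  -ε * lap u x + ⟪b, gradient u x⟫

variable {ε : ℝ} {b : EuclideanSpace ℝ (Fin d)} {u : EuclideanSpace ℝ (Fin d) → ℝ}

theorem ContDiff.continuous_advectionDiffusion (hu : ContDiff ℝ 2 u) :
    Continuous (advectionDiffusion ε b u) :=
  (continuous_const.mul hu.continuous_lap).add
    (continuous_const.inner (hu.continuous_gradient two_ne_zero))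

theorem advectionDiffusion_eq_zero_of_notMem_tsupport {x : EuclideanSpace ℝ (Fin d)}
    (hx : x ∉ tsupport u) : advectionDiffusion ε b u x = 0 := by
  rw [advectionDiffusion, lap_eq_zero_of_notMem_tsupport hx,
    gradient_eq_zero_of_notMem_tsupport hx, inner_zero_right, mul_zero, add_zero]

theorem HasCompactSupport.advectionDiffusion (huc : HasCompactSupport u) :
    HasCompactSupport (advectionDiffusion ε b u) :=
  HasCompactSupport.intro huc fun _ => advectionDiffusion_eq_zero_of_notMem_tsupport

theorem integral_advectionDiffusion_mul_mul_expWeight (hu : ContDiff ℝ 2 u)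
    (huc : HasCompactSupport u) :
    ∫ x, advectionDiffusion ε b u x * (u x * expWeight b x)
      = ε * (∫ x, ‖gradient u x‖ ^ 2 * expWeight b x)
        + (1 - ε) * (‖b‖ ^ 2 / 2 * ∫ x, u x ^ 2 * expWeight b x) := by
  have hu₁ : ContDiff ℝ 1 u := hu.of_le one_le_two
  have huw : ContDiff ℝ 1 fun x => u x * expWeight b x := hu₁.mul (contDiff_expWeight b)
  have hDu : Continuous fun x => fderiv ℝ u x b :=
    (hu.continuous_fderiv two_ne_zero).clm_apply continuous_const
  have hLap : Integrable fun x => u x * expWeight b x * lap u x :=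
    (huw.continuous.mul hu.continuous_lap).integrable_of_hasCompactSupport huc.mul_right.mul_right
  have hTransport : Integrable fun x => u x * expWeight b x * fderiv ℝ u x b :=
    (huw.continuous.mul hDu).integrable_of_hasCompactSupport huc.mul_right.mul_right
  have hInner : ∀ x, ⟪gradient (fun y => u y * expWeight b y) x, gradient u x⟫
      = ‖gradient u x‖ ^ 2 * expWeight b x - u x * expWeight b x * fderiv ℝ u x b := by
    intro x
    rw [inner_gradient_left, fderiv_mul_expWeight_apply (hu₁.differentiable one_ne_zero x),
      ← inner_gradient_left, real_inner_self_eq_norm_sq, real_inner_comm, inner_gradient_left]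
    ring
  have hGreen : ∫ x, u x * expWeight b x * lap u x
      = -(∫ x, ‖gradient u x‖ ^ 2 * expWeight b x)
        + ∫ x, u x * expWeight b x * fderiv ℝ u x b := by
    rw [integral_mul_lap huw hu huc, integral_congr_ae (ae_of_all _ hInner),
      integral_sub (integrable_sq_norm_gradient_mul_expWeight hu₁ huc b) hTransport]
    ring
  have hSplit : ∀ x, advectionDiffusion ε b u x * (u x * expWeight b x)
      = -ε * (u x * expWeight b x * lap u x) + u x * expWeight b x * fderiv ℝ u x b := by
    intro x
    rw [advectionDiffusion, real_inner_comm, inner_gradient_left]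
    ring
  rw [integral_congr_ae (ae_of_all _ hSplit), integral_add (hLap.const_mul _) hTransport,
    integral_const_mul, hGreen, integral_mul_expWeight_mul_fderiv_self hu₁ huc]
  ring

theorem mul_integral_sq_norm_gradient_mul_expWeight_le (hε1 : ε < 1) (hb : b ≠ 0)
    (hu : ContDiff ℝ 2 u) (huc : HasCompactSupport u) :
    ε * ∫ x, ‖gradient u x‖ ^ 2 * expWeight b x
      ≤ (∫ x, advectionDiffusion ε b u x ^ 2 * expWeight b x) / (2 * ((1 - ε) * ‖b‖ ^ 2)) := by
  set L := advectionDiffusion ε b u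
  set α := (1 - ε) * ‖b‖ ^ 2 with hα_def
  have hα : 0 < α := mul_pos (sub_pos.mpr hε1) (pow_pos (norm_pos_iff.mpr hb) 2)
  have hw := (contDiff_expWeight b (n := 0)).continuous
  have hL : Continuous L := hu.continuous_advectionDiffusion
  have hLc : HasCompactSupport L := huc.advectionDiffusion
  have young : ∀ x, L x * (u x * expWeight b x)
      ≤ α / 2 * (u x ^ 2 * expWeight b x) + 1 / (2 * α) * (L x ^ 2 * expWeight b x) := by
    intro x
    have hsq : α / 2 * (u x ^ 2 * expWeight b x) + 1 / (2 * α) * (L x ^ 2 * expWeight b x)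
        - L x * (u x * expWeight b x) = expWeight b x * (α * u x - L x) ^ 2 / (2 * α) := by
      field_simp
      ring
    rw [← sub_nonneg, hsq]
    exact div_nonneg (mul_nonneg (expWeight_pos b x).le (sq_nonneg _)) (mul_pos two_pos hα).le
  have hM : Integrable fun x => u x ^ 2 * expWeight b x :=
    ((hu.continuous.pow 2).mul hw).integrable_of_hasCompactSupport (huc.pow two_ne_zero).mul_right
  have hF : Integrable fun x => L x ^ 2 * expWeight b x :=
    ((hL.pow 2).mul hw).integrable_of_hasCompactSupport (hLc.pow two_ne_zero).mul_right
  have hLuw : Integrable fun x => L x * (u x * expWeight b x) :=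
    (hL.mul (hu.continuous.mul hw)).integrable_of_hasCompactSupport hLc.mul_right
  calc ε * ∫ x, ‖gradient u x‖ ^ 2 * expWeight b x
      = (∫ x, L x * (u x * expWeight b x)) - α / 2 * ∫ x, u x ^ 2 * expWeight b x := by
        rw [integral_advectionDiffusion_mul_mul_expWeight hu huc, hα_def]
        ring
    _ ≤ (∫ x, α / 2 * (u x ^ 2 * expWeight b x) + 1 / (2 * α) * (L x ^ 2 * expWeight b x))
          - α / 2 * ∫ x, u x ^ 2 * expWeight b x :=
        sub_le_sub_right (integral_mono hLuw ((hM.const_mul _).add (hF.const_mul _)) young) _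
    _ = (∫ x, L x ^ 2 * expWeight b x) / (2 * α) := by
        rw [integral_add (hM.const_mul _) (hF.const_mul _), integral_const_mul, integral_const_mul]
        ring

end AdvectionDiffusion

section WeightComparison

variable {X : Type*} [MeasurableSpace X] {μ : Measure X} {φ w : X → ℝ} {s : Set X}

theorem const_mul_integral_le_integral_mul_of_le_on {c : ℝ} (hc : 0 ≤ c) (hφ : 0 ≤ φ)
    (hφw : Integrable (fun x => φ x * w x) μ) (hφs : ∀ x ∉ s, φ x = 0)
    (hw : ∀ x ∈ s, c ≤ w x) :
    c * ∫ x, φ x ∂μ ≤ ∫ x, φ x * w x ∂μ := by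
  rw [← integral_const_mul]
  refine integral_mono_of_nonneg (ae_of_all _ fun x => mul_nonneg hc (hφ x)) hφw
    (ae_of_all _ fun x => ?_)
  by_cases hx : x ∈ s
  · simpa only [mul_comm] using mul_le_mul_of_nonneg_left (hw x hx) (hφ x)
  · simp [hφs x hx]

theorem integral_mul_le_const_mul_integral_of_le_on {C : ℝ} (hw₀ : 0 ≤ w) (hφ : 0 ≤ φ)
    (hφi : Integrable φ μ) (hφs : ∀ x ∉ s, φ x = 0) (hw : ∀ x ∈ s, w x ≤ C) :
    ∫ x, φ x * w x ∂μ ≤ C * ∫ x, φ x ∂μ := by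
  rw [← integral_const_mul]
  refine integral_mono_of_nonneg (ae_of_all _ fun x => mul_nonneg (hφ x) (hw₀ x))
    (hφi.const_mul C) (ae_of_all _ fun x => ?_)
  by_cases hx : x ∈ s
  · simpa only [mul_comm] using mul_le_mul_of_nonneg_left (hw x hx) (hφ x)
  · simp [hφs x hx]

end WeightComparison

theorem H1_seminorm_bound_general
    (d : ℕ) (ε : ℝ) (hε : 0 < ε) (hε1 : ε < 1)
    (b : EuclideanSpace ℝ (Fin d)) (hb : b ≠ 0)
    (u : EuclideanSpace ℝ (Fin d) → ℝ)
    (hu : ContDiff ℝ 2 u) (huc : HasCompactSupport u)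
    (f : EuclideanSpace ℝ (Fin d) → ℝ)
    (hf : ∀ x, f x = -ε * lap u x + ⟪b, gradient u x⟫)
    (cb Cb : ℝ) (hcb : 0 < cb)
    (hbound : ∀ x ∈ tsupport u,
      cb ≤ Real.exp (-⟪b, x⟫) ∧ Real.exp (-⟪b, x⟫) ≤ Cb) :
    ε * ∫ x : EuclideanSpace ℝ (Fin d), ‖gradient u x‖ ^ 2
      ≤ Cb / (cb * (1 - ε) * ‖b‖ ^ 2)
          * ∫ x : EuclideanSpace ℝ (Fin d), (f x) ^ 2 := by
  obtain rfl : f = advectionDiffusion ε b u := funext hf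
  have hα : 0 < (1 - ε) * ‖b‖ ^ 2 := mul_pos (sub_pos.mpr hε1) (pow_pos (norm_pos_iff.mpr hb) 2)
  have hweighted := mul_integral_sq_norm_gradient_mul_expWeight_le hε1 hb hu huc
  have hlower := const_mul_integral_le_integral_mul_of_le_on (μ := volume) hcb.le
    (fun x => sq_nonneg ‖gradient u x‖)
    (integrable_sq_norm_gradient_mul_expWeight (hu.of_le one_le_two) huc b)
    (fun x hx => by rw [gradient_eq_zero_of_notMem_tsupport hx, norm_zero, sq, zero_mul])
    (fun x hx => (hbound x hx).1)
  have hupper := integral_mul_le_const_mul_integral_of_le_on (μ := volume)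
    (fun x => (expWeight_pos b x).le) (fun x => sq_nonneg (advectionDiffusion ε b u x))
    ((hu.continuous_advectionDiffusion.pow 2).integrable_of_hasCompactSupport
      (huc.advectionDiffusion.pow two_ne_zero))
    (fun x hx => by rw [advectionDiffusion_eq_zero_of_notMem_tsupport hx, sq, zero_mul])
    (fun x hx => (hbound x hx).2)
  have hF : 0 ≤ ∫ x, advectionDiffusion ε b u x ^ 2 * expWeight b x :=
    integral_nonneg fun x => mul_nonneg (sq_nonneg _) (expWeight_pos b x).le
  rw [le_div_iff₀ (mul_pos two_pos hα)] at hweighted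
  rw [div_mul_eq_mul_div, le_div_iff₀ (by rw [mul_assoc]; exact mul_pos hcb hα)]
  linarith [mul_le_mul_of_nonneg_left hlower (mul_nonneg hε.le hα.le)]

theorem H1_seminorm_bound
    (d : ℕ) (hd : 1 ≤ d) (ε : ℝ) (hε : 0 < ε) (hε1 : ε < 1)
    (b : EuclideanSpace ℝ (Fin d)) (hb : b ≠ 0)
    (u : EuclideanSpace ℝ (Fin d) → ℝ)
    (hu : ContDiff ℝ 2 u) (huc : HasCompactSupport u)
    (f : EuclideanSpace ℝ (Fin d) → ℝ)
    (hf : ∀ x, f x = -ε * lap u x + ⟪b, gradient u x⟫)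
    (cb Cb : ℝ) (hcb : 0 < cb) (hcbCb : cb ≤ Cb)
    (hbound : ∀ x ∈ tsupport u,
      cb ≤ Real.exp (-⟪b, x⟫) ∧ Real.exp (-⟪b, x⟫) ≤ Cb) :
    ε * ∫ x : EuclideanSpace ℝ (Fin d), ‖gradient u x‖ ^ 2
      ≤ Cb / (cb * (1 - ε) * ‖b‖ ^ 2)
          * ∫ x : EuclideanSpace ℝ (Fin d), (f x) ^ 2 :=
  H1_seminorm_bound_general d ε hε hε1 b hb u hu huc f hf cb Cb hcb hbound
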